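/- Let A_1, …, A_n and ρ be complex d×d matrices with ρ positive semidefinite, and let X = ∑_{i,j=1}^n X_{i,j} ⊗ |i⟩⟨j| be a positive semidefinite matrix on ℂ^d ⊗ ℂ^n with all diagonal blocks equal to the identity, X_{i,i} = 1. Then ∑_{i ≠ j} Re tr( X_{j,i} · A_i ρ A_j† ) ≤ ∑_{i ≠ j} ‖ A_i ρ A_j† ‖₁. -/

import Mathlib

open Matrix
open scoped ComplexOrder

/-- The trace norm `‖A‖₁ = tr √(Aᴴ A)` of a complex matrix. -/
noncomputable def traceNorm {m n : Type*} [Fintype m] [Fintype n] [DecidableEq n]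
    (A : Matrix m n ℂ) : ℝ :=
  ((Matrix.posSemidef_conjTranspose_mul_self A).1.eigenvectorUnitary.1 *
    diagonal (((↑) : ℝ → ℂ) ∘ (√·) ∘ (Matrix.posSemidef_conjTranspose_mul_self A).1.eigenvalues) *
    (star (Matrix.posSemidef_conjTranspose_mul_self A).1.eigenvectorUnitary : Matrix n n ℂ)).trace.re

/-!
Factor `X = Bᴴ B`. Writing `Bᵢ` for the columns of `B` belonging to block `i`, the blocks of `X`
are `X j i = Bⱼᴴ Bᵢ`, and `X i i = 1` says that every `Bᵢ` is an isometry. For any `M`, evaluate the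
trace of `Bⱼᴴ Bᵢ M` in an orthonormal eigenbasis `eₖ` of `Mᴴ M`: by Cauchy–Schwarz each diagonal
entry `⟪Bⱼ eₖ, Bᵢ M eₖ⟫` has modulus at most `‖M eₖ‖ = √λₖ`, and `∑ₖ √λₖ = ‖M‖₁`.
-/

open scoped InnerProductSpace MatrixOrder

namespace Matrix

section Euclidean

variable {𝕜 m n : Type*} [RCLike 𝕜] [Fintype m] [Fintype n] [DecidableEq m] [DecidableEq n]

theorem inner_toLpLin_conjTranspose (P : Matrix m n 𝕜) (x : EuclideanSpace 𝕜 n)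
    (y : EuclideanSpace 𝕜 m) :
    ⟪x, toLpLin 2 2 Pᴴ y⟫_𝕜 = ⟪toLpLin 2 2 P x, y⟫_𝕜 := by
  simp only [toLpLin_apply, EuclideanSpace.inner_eq_star_dotProduct, star_mulVec]
  rw [dotProduct_comm, dotProduct_mulVec, vecMul_conjTranspose, dotProduct_comm]

theorem norm_toLpLin_of_conjTranspose_mul_self_eq_one {P : Matrix m n 𝕜} (hP : Pᴴ * P = 1)
    (x : EuclideanSpace 𝕜 n) : ‖toLpLin 2 2 P x‖ = ‖x‖ := by
  have h : ⟪toLpLin 2 2 P x, toLpLin 2 2 P x⟫_𝕜 = ⟪x, x⟫_𝕜 := by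
    rw [← inner_toLpLin_conjTranspose, ← LinearMap.comp_apply, ← toLpLin_mul_same, hP,
      toLpLin_one, LinearMap.id_apply]
  rw [inner_self_eq_norm_sq_to_K, inner_self_eq_norm_sq_to_K] at h
  exact (pow_left_inj₀ (norm_nonneg _) (norm_nonneg _) two_ne_zero).mp (by exact_mod_cast h)

omit [DecidableEq m] in
theorem trace_eq_sum_inner (N : Matrix n n 𝕜) (b : OrthonormalBasis n 𝕜 (EuclideanSpace 𝕜 n)) :
    N.trace = ∑ k, ⟪b k, toLpLin 2 2 N (b k)⟫_𝕜 := by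
  rw [← LinearMap.trace_eq_sum_inner, toLpLin_eq_toLin,
    LinearMap.trace_eq_matrix_trace _ (PiLp.basisFun 2 𝕜 n), LinearMap.toMatrix_toLin]

theorem IsHermitian.eigenvalues_conjTranspose_mul_self (M : Matrix m n 𝕜) (k : n) :
    (isHermitian_conjTranspose_mul_self M).eigenvalues k =
      ‖toLpLin 2 2 M ((isHermitian_conjTranspose_mul_self M).eigenvectorBasis k)‖ ^ 2 := by
  rw [IsHermitian.eigenvalues_eq, dotProduct_comm, ← EuclideanSpace.inner_eq_star_dotProduct,
    ← toLpLin_apply, toLpLin_mul_same, LinearMap.comp_apply, inner_toLpLin_conjTranspose,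
    inner_self_eq_norm_sq_to_K]
  exact_mod_cast RCLike.ofReal_re (K := 𝕜) _

omit [DecidableEq m] in
theorem PosSemidef.exists_eq_conjTranspose_mul_self {X : Matrix n n 𝕜} (hX : X.PosSemidef) :
    ∃ B : Matrix n n 𝕜, X = Bᴴ * B := by
  obtain ⟨B, rfl⟩ := CStarAlgebra.nonneg_iff_eq_star_mul_self.mp hX.nonneg
  exact ⟨B, rfl⟩

end Euclidean

theorem submatrix_conjTranspose_mul_self {α l m n : Type*} [NonUnitalSemiring α] [StarRing α]
    [Fintype m] (B : Matrix m n α) (r s : l → n) :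
    (Bᴴ * B).submatrix r s = (B.submatrix id r)ᴴ * B.submatrix id s := by
  rw [conjTranspose_submatrix, submatrix_mul _ _ _ id _ Function.bijective_id]

end Matrix

open Matrix

section TraceNorm

variable {m n : Type*} [Fintype m] [Fintype n] [DecidableEq n]

theorem traceNorm_eq_sum_sqrt_eigenvalues (M : Matrix m n ℂ) :
    traceNorm M = ∑ k, √((isHermitian_conjTranspose_mul_self M).eigenvalues k) := by
  rw [traceNorm, trace_mul_comm, ← mul_assoc, Unitary.coe_star_mul_self, one_mul, trace_diagonal,
    Complex.re_sum]
  rfl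

theorem re_trace_conjTranspose_mul_mul_le_traceNorm {l : Type*} [Fintype l] [DecidableEq l]
    [DecidableEq m]
    {P : Matrix l n ℂ} {Q : Matrix l m ℂ} (hP : Pᴴ * P = 1) (hQ : Qᴴ * Q = 1)
    (M : Matrix m n ℂ) : (Pᴴ * Q * M).trace.re ≤ traceNorm M := by
  set e := (isHermitian_conjTranspose_mul_self M).eigenvectorBasis
  rw [trace_eq_sum_inner _ e, Complex.re_sum, traceNorm_eq_sum_sqrt_eigenvalues]
  refine Finset.sum_le_sum fun k _ => ?_
  calc (⟪e k, toLpLin 2 2 (Pᴴ * Q * M) (e k)⟫_ℂ).re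
      ≤ ‖⟪toLpLin 2 2 P (e k), toLpLin 2 2 Q (toLpLin 2 2 M (e k))⟫_ℂ‖ := by
        rw [toLpLin_mul_same, toLpLin_mul_same, LinearMap.comp_apply, LinearMap.comp_apply,
          inner_toLpLin_conjTranspose]
        exact Complex.re_le_norm _
    _ ≤ ‖toLpLin 2 2 P (e k)‖ * ‖toLpLin 2 2 Q (toLpLin 2 2 M (e k))‖ := norm_inner_le_norm _ _
    _ = √((isHermitian_conjTranspose_mul_self M).eigenvalues k) := by
        rw [norm_toLpLin_of_conjTranspose_mul_self_eq_one hP,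
          norm_toLpLin_of_conjTranspose_mul_self_eq_one hQ,
          IsHermitian.eigenvalues_conjTranspose_mul_self, Real.sqrt_sq (norm_nonneg _),
          e.orthonormal.1 k, one_mul]

end TraceNorm

theorem dual_objective_le_l1_povm_coherence_general
    (n d : ℕ) (A : Fin n → Matrix (Fin d) (Fin d) ℂ)
    (ρ : Matrix (Fin d) (Fin d) ℂ)
    (X : Matrix (Fin d × Fin n) (Fin d × Fin n) ℂ)
    (hX : X.PosSemidef)
    (hdiag : ∀ i : Fin n, (Matrix.of fun a b => X (a, i) (b, i)) =
      (1 : Matrix (Fin d) (Fin d) ℂ)) :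
    ∑ q ∈ (Finset.univ : Finset (Fin n)).offDiag,
        ((Matrix.of fun a b => X (a, q.2) (b, q.1)) *
          (A q.1 * ρ * (A q.2)ᴴ)).trace.re
      ≤ ∑ q ∈ (Finset.univ : Finset (Fin n)).offDiag,
          traceNorm (A q.1 * ρ * (A q.2)ᴴ) := by
  obtain ⟨B, rfl⟩ := hX.exists_eq_conjTranspose_mul_self
  have hblock (i j : Fin n) : (Matrix.of fun a b => (Bᴴ * B) (a, i) (b, j)) =
      (B.submatrix id (·, i))ᴴ * B.submatrix id (·, j) :=
    submatrix_conjTranspose_mul_self B _ _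
  have hisometry (i : Fin n) : (B.submatrix id (·, i))ᴴ * B.submatrix id (·, i) = 1 := by
    rw [← hblock, hdiag]
  refine Finset.sum_le_sum fun q _ => ?_
  rw [hblock]
  exact re_trace_conjTranspose_mul_mul_le_traceNorm (hisometry _) (hisometry _) _

/-- Let `ρ` be positive semidefinite, and `X` a positive semidefinite matrix on
`ℂ^d ⊗ ℂ^n` with blocks `X i j = (fun a b => X (a, i) (b, j))` whose diagonal blocks equal the
identity. Then `∑_{i ≠ j} Re tr(X j i · A i ρ A jᴴ) ≤ ∑_{i ≠ j} ‖A i ρ A jᴴ‖₁`. -/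
theorem dual_objective_le_l1_povm_coherence
    (n d : ℕ) (A : Fin n → Matrix (Fin d) (Fin d) ℂ)
    (ρ : Matrix (Fin d) (Fin d) ℂ) (hρ : ρ.PosSemidef)
    (X : Matrix (Fin d × Fin n) (Fin d × Fin n) ℂ)
    (hX : X.PosSemidef)
    (hdiag : ∀ i : Fin n, (Matrix.of fun a b => X (a, i) (b, i)) =
      (1 : Matrix (Fin d) (Fin d) ℂ)) :
    ∑ q ∈ (Finset.univ : Finset (Fin n)).offDiag,
        ((Matrix.of fun a b => X (a, q.2) (b, q.1)) *
          (A q.1 * ρ * (A q.2)ᴴ)).trace.re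
      ≤ ∑ q ∈ (Finset.univ : Finset (Fin n)).offDiag,
          traceNorm (A q.1 * ρ * (A q.2)ᴴ) :=
  dual_objective_le_l1_povm_coherence_general n d A ρ X hX hdiag
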